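/- There exist finite loopless simple graphs A, B, C and graph homomorphisms f : A → B, g : A → C such that the pushout graph G of f and g satisfies χ(G) = 5 while the double mapping cylinder D_n of f and g has χ(D_n) = 4 for every n > 1. Hence the inequality χ(G) ≥ χ(D_n) can be strict. -/

import Mathlib

/-- A graph (possibly with loops) on vertex type `V`. -/
structure GraphL (V : Type) where
  Adj : V → V → Prop
  symm : ∀ {x y}, Adj x y → Adj y x

/-- A graph homomorphism. -/
structure GHom {V W : Type} (G : GraphL V) (H : GraphL W) where
  toFun : V → W
  map_adj : ∀ {x y}, G.Adj x y → H.Adj (toFun x) (toFun y)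

/-- The complete graph `K_k` as a `GraphL`. -/
def completeG (k : ℕ) : GraphL (Fin k) :=
  ⟨fun i j => i ≠ j, fun h => Ne.symm h⟩

/-- `Colorable G k` iff there is a homomorphism `G → K_k`. -/
def GraphL.Colorable {V : Type} (G : GraphL V) (k : ℕ) : Prop :=
  Nonempty (GHom G (completeG k))

/-- The chromatic number: least `k` admitting a proper colouring. -/
noncomputable def chromNum {V : Type} (G : GraphL V) : ℕ :=
  sInf {k | G.Colorable k}

/-- The categorical product `A × I_n`, where `I_n` is the looped path on `{0, …, n}`. -/
def GraphL.prodIn {V : Type} (A : GraphL V) (n : ℕ) : GraphL (V × Fin (n + 1)) :=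
  ⟨fun p q => A.Adj p.1 q.1 ∧ |(p.2 : ℤ) - (q.2 : ℤ)| ≤ 1, by
    rintro ⟨a, i⟩ ⟨b, j⟩ ⟨h1, h2⟩
    exact ⟨A.symm h1, by rwa [abs_sub_comm]⟩⟩

section Cyl
variable {VA VB VC : Type}

/-- Generating relation for the double mapping cylinder: `f a ∼ (a, n)` and `g a ∼ (a, 0)`. -/
def cylRel (f : VA → VB) (g : VA → VC) (n : ℕ) :
    (VB ⊕ (VA × Fin (n + 1)) ⊕ VC) → (VB ⊕ (VA × Fin (n + 1)) ⊕ VC) → Prop :=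
  fun x y =>
    (∃ a, x = Sum.inl (f a) ∧ y = Sum.inr (Sum.inl (a, Fin.last n))) ∨
    (∃ a, x = Sum.inr (Sum.inr (g a)) ∧ y = Sum.inr (Sum.inl (a, 0)))

/-- Vertices of the double mapping cylinder `D_n`. -/
def CylVert (f : VA → VB) (g : VA → VC) (n : ℕ) : Type :=
  Quot (cylRel f g n)

/-- Adjacency on the disjoint union `B ⊔ (A × I_n) ⊔ C`. -/
def cylBaseAdj (A : GraphL VA) (B : GraphL VB) (C : GraphL VC) (n : ℕ) :
    (VB ⊕ (VA × Fin (n + 1)) ⊕ VC) → (VB ⊕ (VA × Fin (n + 1)) ⊕ VC) → Prop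
  | Sum.inl b, Sum.inl b' => B.Adj b b'
  | Sum.inr (Sum.inl p), Sum.inr (Sum.inl q) => (A.prodIn n).Adj p q
  | Sum.inr (Sum.inr c), Sum.inr (Sum.inr c') => C.Adj c c'
  | _, _ => False

/-- The double mapping cylinder `D_n = B ⊔_f (A × I_n) ⊔_g C` of `f : A → B`, `g : A → C`. -/
def cylGraph (A : GraphL VA) (B : GraphL VB) (C : GraphL VC)
    (f : VA → VB) (g : VA → VC) (n : ℕ) : GraphL (CylVert f g n) :=
  ⟨fun x y => ∃ x₀ y₀, Quot.mk _ x₀ = x ∧ Quot.mk _ y₀ = y ∧ cylBaseAdj A B C n x₀ y₀, by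
    rintro x y ⟨x₀, y₀, hx, hy, h⟩
    refine ⟨y₀, x₀, hy, hx, ?_⟩
    rcases x₀ with b | p | c <;> rcases y₀ with b' | p' | c' <;>
      simp only [cylBaseAdj] at h ⊢
    · exact B.symm h
    · exact (A.prodIn n).symm h
    · exact C.symm h⟩

/-- Generating relation for the pushout: `f a ∼ g a`. -/
def pushRel (f : VA → VB) (g : VA → VC) : (VB ⊕ VC) → (VB ⊕ VC) → Prop :=
  fun x y => ∃ a, x = Sum.inl (f a) ∧ y = Sum.inr (g a)

/-- Vertices of the pushout graph. -/
def PushVert (f : VA → VB) (g : VA → VC) : Type := Quot (pushRel f g)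

def pushBaseAdj (B : GraphL VB) (C : GraphL VC) : (VB ⊕ VC) → (VB ⊕ VC) → Prop
  | Sum.inl b, Sum.inl b' => B.Adj b b'
  | Sum.inr c, Sum.inr c' => C.Adj c c'
  | _, _ => False

/-- The pushout graph `G = B ⊔_A C` of `f : A → B`, `g : A → C`. -/
def pushGraph (B : GraphL VB) (C : GraphL VC) (f : VA → VB) (g : VA → VC) :
    GraphL (PushVert f g) :=
  ⟨fun x y => ∃ x₀ y₀, Quot.mk _ x₀ = x ∧ Quot.mk _ y₀ = y ∧ pushBaseAdj B C x₀ y₀, by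
    rintro x y ⟨x₀, y₀, hx, hy, h⟩
    refine ⟨y₀, x₀, hy, hx, ?_⟩
    rcases x₀ with b | c <;> rcases y₀ with b' | c' <;> simp only [pushBaseAdj] at h ⊢
    · exact B.symm h
    · exact C.symm h⟩

end Cyl

/-!
In the pushout the vertices `a, b, c, d` of `A` span a `K₄` (coming from `B`) and `y` is joined
to all of them (in `C`), so `G` contains a `K₅`. In `D_n` the two copies of `A` are linked only
through `A × I_n`, so they may be coloured differently: colour `B` by `a, b, c, d, x ↦ 0, 1, 2, 3, 2`
and `C` by `a, b, c, d, y ↦ 1, 1, 2, 3, 0` (`a` and `b` are not adjacent in `C`). Along the cylinder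
only `a` has to change colour, from `1` to `0`, which is possible since its only neighbour `d` in
`A` keeps colour `3` throughout. The `K₄` of `B` shows that four colours are needed.
-/

instance (k : ℕ) : DecidableRel (completeG k).Adj :=
  fun i j => inferInstanceAs (Decidable (i ≠ j))

def GHom.comp {U V W : Type} {G : GraphL U} {H : GraphL V} {K : GraphL W}
    (ψ : GHom H K) (φ : GHom G H) : GHom G K :=
  ⟨ψ.toFun ∘ φ.toFun, fun h => ψ.map_adj (φ.map_adj h)⟩

theorem GHom.comp_apply {U V W : Type} {G : GraphL U} {H : GraphL V} {K : GraphL W}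
    (ψ : GHom H K) (φ : GHom G H) (x : U) : (ψ.comp φ).toFun x = ψ.toFun (φ.toFun x) :=
  rfl

namespace GraphL

variable {V : Type} {G : GraphL V} {k m : ℕ}

def ofEdges (l : List (Fin k × Fin k)) : GraphL (Fin k) :=
  ⟨fun i j => (i, j) ∈ l ∨ (j, i) ∈ l, Or.symm⟩

instance (l : List (Fin k × Fin k)) : DecidableRel (ofEdges l).Adj :=
  fun i j => inferInstanceAs (Decidable ((i, j) ∈ l ∨ (j, i) ∈ l))

theorem Colorable.mono (hkm : k ≤ m) : G.Colorable k → G.Colorable m :=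
  fun ⟨c⟩ => ⟨⟨Fin.castLE hkm ∘ c.toFun,
    fun h heq => c.map_adj h (Fin.castLE_injective hkm heq)⟩⟩

theorem Colorable.irrefl (hG : G.Colorable k) (v : V) : ¬ G.Adj v v :=
  fun h => hG.some.map_adj h rfl

theorem not_colorable_of_clique {s : Fin k → V} (hs : ∀ i j, i ≠ j → G.Adj (s i) (s j))
    (hmk : m < k) : ¬ G.Colorable m := by
  rintro ⟨c⟩
  have hinj : Function.Injective (c.toFun ∘ s) := fun i j hij => by
    by_contra hne
    exact c.map_adj (hs i j hne) hij
  exact absurd (Fin.le_of_injective _ hinj) (not_le.mpr hmk)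

def prodInCollapse (A : GraphL V) (n : ℕ) : GHom (A.prodIn n) (A.prodIn 1) :=
  ⟨fun p => (p.1, if p.2 = Fin.last n then 1 else 0), fun h => ⟨h.1, by split_ifs <;> simp⟩⟩

theorem prodInCollapse_last (A : GraphL V) (n : ℕ) (a : V) :
    (A.prodInCollapse n).toFun (a, Fin.last n) = (a, 1) := by
  simp [prodInCollapse]

theorem prodInCollapse_zero (A : GraphL V) {n : ℕ} (hn : n ≠ 0) (a : V) :
    (A.prodInCollapse n).toFun (a, 0) = (a, 0) := by
  simp [prodInCollapse, Fin.ext_iff, Ne.symm hn]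

end GraphL

theorem chromNum_eq_of_colorable_of_not_colorable {V : Type} {G : GraphL V} {m : ℕ}
    (h : G.Colorable (m + 1)) (h' : ¬ G.Colorable m) : chromNum G = m + 1 :=
  le_antisymm (Nat.sInf_le h) <| le_csInf ⟨m + 1, h⟩ fun _ hk =>
    not_lt.mp fun hlt => h' (hk.mono (Nat.le_of_lt_succ hlt))

section Pushout

variable {VA VB VC W : Type} {B : GraphL VB} {C : GraphL VC} {f : VA → VB} {g : VA → VC}

theorem pushGraph_adj_inl {b b' : VB} (h : B.Adj b b') :
    (pushGraph B C f g).Adj (Quot.mk _ (.inl b)) (Quot.mk _ (.inl b')) :=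
  ⟨_, _, rfl, rfl, h⟩

theorem pushGraph_adj_inr {c c' : VC} (h : C.Adj c c') :
    (pushGraph B C f g).Adj (Quot.mk _ (.inr c)) (Quot.mk _ (.inr c')) :=
  ⟨_, _, rfl, rfl, h⟩

theorem pushVert_mk_inl_eq_mk_inr (a : VA) :
    (Quot.mk _ (.inl (f a)) : PushVert f g) = Quot.mk _ (.inr (g a)) :=
  Quot.sound ⟨a, rfl, rfl⟩

def pushGraph.desc {H : GraphL W} (φB : GHom B H) (φC : GHom C H)
    (h : ∀ a, φB.toFun (f a) = φC.toFun (g a)) : GHom (pushGraph B C f g) H :=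
  ⟨Quot.lift (Sum.elim φB.toFun φC.toFun) (by rintro _ _ ⟨a, rfl, rfl⟩; exact h a), by
    rintro _ _ ⟨x | x, y | y, rfl, rfl, hxy⟩
    exacts [φB.map_adj hxy, hxy.elim, hxy.elim, φC.map_adj hxy]⟩

end Pushout

section Cylinder

variable {VA VB VC W : Type} {A : GraphL VA} {B : GraphL VB} {C : GraphL VC}
  {f : VA → VB} {g : VA → VC} {n : ℕ}

theorem cylGraph_adj_inl {b b' : VB} (h : B.Adj b b') :
    (cylGraph A B C f g n).Adj (Quot.mk _ (.inl b)) (Quot.mk _ (.inl b')) :=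
  ⟨_, _, rfl, rfl, h⟩

def cylGraph.desc {H : GraphL W} (φB : GHom B H) (φM : GHom (A.prodIn n) H) (φC : GHom C H)
    (hB : ∀ a, φB.toFun (f a) = φM.toFun (a, Fin.last n))
    (hC : ∀ a, φC.toFun (g a) = φM.toFun (a, 0)) : GHom (cylGraph A B C f g n) H :=
  ⟨Quot.lift (Sum.elim φB.toFun (Sum.elim φM.toFun φC.toFun))
    (by rintro _ _ (⟨a, rfl, rfl⟩ | ⟨a, rfl, rfl⟩) <;> simp [hB, hC]), by
    rintro _ _ ⟨x | x | x, y | y | y, rfl, rfl, hxy⟩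
    exacts [φB.map_adj hxy, hxy.elim, hxy.elim, hxy.elim, φM.map_adj hxy, hxy.elim, hxy.elim,
      hxy.elim, φC.map_adj hxy]⟩

end Cylinder

namespace PushoutCylinderExample

open GraphL

-- The vertices `a, b, c, d` of `A` are `0, 1, 2, 3`; the extra vertex `x` of `B`, resp. `y` of
-- `C`, is `4`.
abbrev A : GraphL (Fin 4) := ofEdges [(0, 3), (3, 2), (2, 1)]
abbrev B : GraphL (Fin 5) :=
  ofEdges [(0, 3), (3, 2), (2, 1), (0, 2), (3, 1), (0, 1), (4, 0), (4, 1)]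
abbrev C : GraphL (Fin 5) := ofEdges [(0, 3), (3, 2), (2, 1), (4, 0), (4, 1), (4, 2), (4, 3)]

def f : GHom A B := ⟨Fin.castSucc, fun {x y} => by revert x y; decide⟩
def g : GHom A C := ⟨Fin.castSucc, fun {x y} => by revert x y; decide⟩

theorem pushGraph_colorable_five : (pushGraph B C f.toFun g.toFun).Colorable 5 :=
  ⟨pushGraph.desc ⟨![0, 1, 2, 3, 2], fun {x y} => by revert x y; decide⟩
    ⟨id, fun {x y} => by revert x y; decide⟩ (by decide)⟩

theorem pushGraph_not_colorable_four : ¬ (pushGraph B C f.toFun g.toFun).Colorable 4 := by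
  refine not_colorable_of_clique (s := fun i : Fin 5 => Quot.mk _ (.inr i)) (fun i j hij => ?_)
    (by norm_num)
  by_cases hC : C.Adj i j
  · exact pushGraph_adj_inr hC
  · obtain ⟨a, b, rfl, rfl, hB⟩ :
        ∃ a b : Fin 4, f.toFun a = i ∧ f.toFun b = j ∧ B.Adj (f.toFun a) (f.toFun b) := by
      revert i j; decide
    have hadj := pushGraph_adj_inl (C := C) (f := f.toFun) (g := g.toFun) hB
    rwa [pushVert_mk_inl_eq_mk_inr, pushVert_mk_inl_eq_mk_inr] at hadj

def colorB : GHom B (completeG 4) := ⟨![0, 1, 2, 3, 2], fun {x y} => by revert x y; decide⟩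

def colorC : GHom C (completeG 4) := ⟨![1, 1, 2, 3, 0], fun {x y} => by revert x y; decide⟩

-- Only `a` changes colour along `I_1`: it matches `colorC` on layer `0` and `colorB` on layer `1`.
def colorM : GHom (A.prodIn 1) (completeG 4) where
  toFun p := ![![1, 0], ![1, 1], ![2, 2], ![3, 3]] p.1 p.2
  map_adj {p q} h := by
    have hA := h.1
    clear h
    revert p q
    decide

theorem cylGraph_colorable_four {n : ℕ} (hn : n ≠ 0) :
    (cylGraph A B C f.toFun g.toFun n).Colorable 4 := by
  refine ⟨cylGraph.desc colorB (colorM.comp (A.prodInCollapse n)) colorC (fun a => ?_)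
    (fun a => ?_)⟩
  · rw [GHom.comp_apply, prodInCollapse_last]; revert a; decide
  · rw [GHom.comp_apply, prodInCollapse_zero A hn]; revert a; decide

theorem cylGraph_not_colorable_three (n : ℕ) :
    ¬ (cylGraph A B C f.toFun g.toFun n).Colorable 3 :=
  not_colorable_of_clique (s := fun a : Fin 4 => Quot.mk _ (.inl a.castSucc))
    (fun i j hij => cylGraph_adj_inl (by revert i j; decide)) (by norm_num)

end PushoutCylinderExample

/-- There are finite loopless simple graphs `A, B, C` and homomorphisms
`f : A → B`, `g : A → C` whose pushout `G` has chromatic number 5, while every double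
mapping cylinder `D_n` with `n > 1` has chromatic number 4.  So `χ(G) ≥ χ(D_n)` can be strict. -/
theorem exists_pushout_chromatic_gt_cylinder :
    ∃ (VA VB VC : Type) (_ : Fintype VA) (_ : Fintype VB) (_ : Fintype VC)
      (A : GraphL VA) (B : GraphL VB) (C : GraphL VC)
      (f : GHom A B) (g : GHom A C),
      (∀ v, ¬ A.Adj v v) ∧ (∀ v, ¬ B.Adj v v) ∧ (∀ v, ¬ C.Adj v v) ∧
      (∀ v, ¬ (pushGraph B C f.toFun g.toFun).Adj v v) ∧
      chromNum (pushGraph B C f.toFun g.toFun) = 5 ∧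
      ∀ n : ℕ, 1 < n → chromNum (cylGraph A B C f.toFun g.toFun n) = 4 := by
  open PushoutCylinderExample in
  refine ⟨Fin 4, Fin 5, Fin 5, inferInstance, inferInstance, inferInstance, A, B, C, f, g,
    by decide, by decide, by decide, GraphL.Colorable.irrefl pushGraph_colorable_five,
    chromNum_eq_of_colorable_of_not_colorable pushGraph_colorable_five
      pushGraph_not_colorable_four,
    fun n hn => chromNum_eq_of_colorable_of_not_colorable (cylGraph_colorable_four (by omega))
      (cylGraph_not_colorable_three n)⟩
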